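/- Let f be a holomorphic self-map of the unit disk D without fixed points, and suppose some left straightening h of {f^n} is a constant map. Then lim_{n→∞} ω(f^n(z), f^n(w)) = 0 for all z, w ∈ D; in particular the hyperbolic step s^f is identically zero. -/

import Mathlib

open Complex Metric Filter Set

/-- Inverse hyperbolic tangent. -/
noncomputable def artanh (t : ℝ) : ℝ := (1/2) * Real.log ((1 + t) / (1 - t))

/-- Poincaré distance on the unit disk. -/
noncomputable def pd (z w : ℂ) : ℝ :=
  artanh (‖(w - z) / (1 - (starRingEnd ℂ) z * w)‖)

/-- Holomorphic self-map of the unit disk. -/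
def HolSelfDisk (f : ℂ → ℂ) : Prop :=
  DifferentiableOn ℂ f (ball (0:ℂ) 1) ∧ MapsTo f (ball (0:ℂ) 1) (ball (0:ℂ) 1)

/-- A pair of maps that are mutually inverse holomorphic self-maps of the disk,
i.e. an automorphism of the disk together with its inverse. -/
def IsDiskAutPair (γ γinv : ℂ → ℂ) : Prop :=
  HolSelfDisk γ ∧ HolSelfDisk γinv ∧
  (∀ z ∈ ball (0:ℂ) 1, γinv (γ z) = z) ∧ (∀ z ∈ ball (0:ℂ) 1, γ (γinv z) = z)

/-!
By Schwarz–Pick, applied to `γ n` and to `γinv n`, disk automorphisms preserve the Poincaré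
distance, so `pd (fⁿ z) (fⁿ w) = pd (γinv n (fⁿ z)) (γinv n (fⁿ w))`. Both arguments on the right
tend to the value `c` of the constant straightening, which lies in the open disk since `h` maps
into it, and `pd` is continuous at `(c, c)` with `pd c c = 0`. The hyperbolic step is the case
`w = f z`.
-/

open Topology

noncomputable def mobius (a w : ℂ) : ℂ := (w - a) / (1 - (starRingEnd ℂ) a * w)

lemma pd_eq_artanh_norm_mobius (a b : ℂ) : pd a b = artanh ‖mobius a b‖ := rfl

lemma one_sub_conj_mul_ne_zero {a w : ℂ} (ha : ‖a‖ < 1) (hw : ‖w‖ < 1) :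
    (1 : ℂ) - (starRingEnd ℂ) a * w ≠ 0 := by
  intro h
  have h1 := congrArg norm (sub_eq_zero.mp h)
  rw [norm_one, norm_mul, Complex.norm_conj] at h1
  nlinarith [norm_nonneg a, norm_nonneg w]

lemma normSq_one_sub_conj_mul_sub_normSq_sub (a w : ℂ) :
    normSq (1 - (starRingEnd ℂ) a * w) - normSq (w - a) = (1 - normSq a) * (1 - normSq w) := by
  simp only [normSq_apply, sub_re, sub_im, mul_re, mul_im, one_re, one_im, conj_re, conj_im]
  ring

lemma norm_mobius_lt_one {a w : ℂ} (ha : ‖a‖ < 1) (hw : ‖w‖ < 1) : ‖mobius a w‖ < 1 := by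
  have hD := norm_pos_iff.mpr (one_sub_conj_mul_ne_zero ha hw)
  rw [mobius, norm_div, div_lt_one hD]
  refine lt_of_pow_lt_pow_left₀ 2 (norm_nonneg _) ?_
  have hna : normSq a < 1 := by rw [← Complex.sq_norm]; nlinarith [norm_nonneg a]
  have hnw : normSq w < 1 := by rw [← Complex.sq_norm]; nlinarith [norm_nonneg w]
  rw [Complex.sq_norm, Complex.sq_norm]
  nlinarith [normSq_one_sub_conj_mul_sub_normSq_sub a w]

lemma holSelfDisk_mobius {a : ℂ} (ha : a ∈ ball (0:ℂ) 1) : HolSelfDisk (mobius a) := by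
  rw [mem_ball_zero_iff] at ha
  refine ⟨?_, fun w hw => ?_⟩
  · refine DifferentiableOn.div (by fun_prop) (by fun_prop) fun w hw => ?_
    exact one_sub_conj_mul_ne_zero ha (mem_ball_zero_iff.mp hw)
  · rw [mem_ball_zero_iff] at hw ⊢
    exact norm_mobius_lt_one ha hw

lemma mobius_neg_mobius {a w : ℂ} (ha : ‖a‖ < 1) (hw : ‖w‖ < 1) :
    mobius (-a) (mobius a w) = w := by
  have hD := one_sub_conj_mul_ne_zero ha hw
  have haa := one_sub_conj_mul_ne_zero ha ha
  have hnum : mobius a w + a = w * (1 - starRingEnd ℂ a * a) / (1 - starRingEnd ℂ a * w) := by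
    rw [mobius, div_add' _ _ _ hD]; ring
  have hden : 1 + starRingEnd ℂ a * mobius a w
      = (1 - starRingEnd ℂ a * a) / (1 - starRingEnd ℂ a * w) := by
    rw [mobius, mul_div_assoc', one_add_div hD]; ring
  calc mobius (-a) (mobius a w)
      = (mobius a w + a) / (1 + starRingEnd ℂ a * mobius a w) := by simp [mobius]
    _ = w := by rw [hnum, hden, div_div_div_cancel_right₀ hD, mul_div_cancel_right₀ _ haa]

/-- Schwarz–Pick lemma: apply the Schwarz lemma to `mobius (g a) ∘ g ∘ mobius (-a)`. -/
lemma norm_mobius_map_le_norm_mobius {g : ℂ → ℂ} (hg : HolSelfDisk g) {a b : ℂ}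
    (ha : a ∈ ball (0:ℂ) 1) (hb : b ∈ ball (0:ℂ) 1) :
    ‖mobius (g a) (g b)‖ ≤ ‖mobius a b‖ := by
  have ha' := mem_ball_zero_iff.mp ha
  have hb' := mem_ball_zero_iff.mp hb
  have hna : -a ∈ ball (0:ℂ) 1 := by rwa [mem_ball_zero_iff, norm_neg]
  obtain ⟨hφd, hφm⟩ : HolSelfDisk (mobius (g a) ∘ g ∘ mobius (-a)) := by
    obtain ⟨hgd, hgm⟩ := hg
    obtain ⟨hd₁, hm₁⟩ := holSelfDisk_mobius (hgm ha)
    obtain ⟨hd₂, hm₂⟩ := holSelfDisk_mobius hna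
    exact ⟨hd₁.comp (hgd.comp hd₂ hm₂) (hgm.comp hm₂), hm₁.comp (hgm.comp hm₂)⟩
  have hφ0 : (mobius (g a) ∘ g ∘ mobius (-a)) 0 = 0 := by simp [mobius]
  have := norm_le_norm_of_mapsTo_ball hφd (hφm.mono_right ball_subset_closedBall) hφ0
    (norm_mobius_lt_one ha' hb')
  simpa [mobius_neg_mobius ha' hb'] using this

lemma artanh_eq_real_artanh {t : ℝ} (ht : t ∈ Icc (-1) 1) : artanh t = Real.artanh t :=
  (Real.artanh_eq_half_log ht).symm

lemma pd_eq_real_artanh {a b : ℂ} (ha : a ∈ ball (0:ℂ) 1) (hb : b ∈ ball (0:ℂ) 1) :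
    pd a b = Real.artanh ‖mobius a b‖ := by
  have := norm_mobius_lt_one (mem_ball_zero_iff.mp ha) (mem_ball_zero_iff.mp hb)
  rw [pd_eq_artanh_norm_mobius]
  exact artanh_eq_real_artanh ⟨by linarith [norm_nonneg (mobius a b)], this.le⟩

lemma pd_map_le {g : ℂ → ℂ} (hg : HolSelfDisk g) {a b : ℂ}
    (ha : a ∈ ball (0:ℂ) 1) (hb : b ∈ ball (0:ℂ) 1) : pd (g a) (g b) ≤ pd a b := by
  rw [pd_eq_real_artanh (hg.2 ha) (hg.2 hb), pd_eq_real_artanh ha hb]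
  exact Real.artanh_le_artanh (by linarith [norm_nonneg (mobius (g a) (g b))])
    (norm_mobius_lt_one (mem_ball_zero_iff.mp ha) (mem_ball_zero_iff.mp hb))
    (norm_mobius_map_le_norm_mobius hg ha hb)

lemma IsDiskAutPair.pd_inv_eq {γ γinv : ℂ → ℂ} (hγ : IsDiskAutPair γ γinv) {z w : ℂ}
    (hz : z ∈ ball (0:ℂ) 1) (hw : w ∈ ball (0:ℂ) 1) : pd (γinv z) (γinv w) = pd z w := by
  obtain ⟨hγhol, hγinvhol, -, hγγinv⟩ := hγ
  refine le_antisymm (pd_map_le hγinvhol hz hw) ?_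
  calc pd z w = pd (γ (γinv z)) (γ (γinv w)) := by rw [hγγinv z hz, hγγinv w hw]
    _ ≤ pd (γinv z) (γinv w) := pd_map_le hγhol (hγinvhol.2 hz) (hγinvhol.2 hw)

lemma continuousAt_artanh_zero : ContinuousAt artanh 0 := by
  unfold artanh
  fun_prop (disch := norm_num)

lemma tendsto_pd_zero_of_tendsto {ι : Type*} {l : Filter ι} {a b : ι → ℂ} {c : ℂ}
    (hc : c ∈ ball (0:ℂ) 1) (ha : Tendsto a l (𝓝 c)) (hb : Tendsto b l (𝓝 c)) :
    Tendsto (fun i => pd (a i) (b i)) l (𝓝 0) := by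
  have hc' := mem_ball_zero_iff.mp hc
  have hmob : Tendsto (fun i => mobius (a i) (b i)) l (𝓝 0) := by
    have hden := tendsto_const_nhds (x := (1 : ℂ)).sub
      (((continuous_conj.tendsto c).comp ha).mul hb)
    have := (hb.sub ha).div hden (one_sub_conj_mul_ne_zero hc' hc')
    rwa [sub_self, zero_div] at this
  have := continuousAt_artanh_zero.tendsto.comp (tendsto_norm_zero.comp hmob)
  rwa [show artanh 0 = 0 by simp [artanh]] at this

theorem stmt7_general (f : ℂ → ℂ) (hf : HolSelfDisk f)
    (γ γinv : ℕ → ℂ → ℂ) (h : ℂ → ℂ)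
    (hγ : ∀ n, IsDiskAutPair (γ n) (γinv n)) (hh : HolSelfDisk h)
    (hconv : TendstoLocallyUniformlyOn (fun n z => γinv n (f^[n] z)) h atTop (ball (0:ℂ) 1))
    (hconst : ∃ c : ℂ, ∀ z ∈ ball (0:ℂ) 1, h z = c) :
    (∀ z ∈ ball (0:ℂ) 1, ∀ w ∈ ball (0:ℂ) 1,
      Tendsto (fun n => pd (f^[n] z) (f^[n] w)) atTop (nhds 0)) ∧
    (∀ z ∈ ball (0:ℂ) 1,
      Tendsto (fun n => pd (f^[n] z) (f^[n+1] z)) atTop (nhds 0)) := by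
  obtain ⟨c, hc⟩ := hconst
  have h0 : (0:ℂ) ∈ ball (0:ℂ) 1 := mem_ball_self one_pos
  have hc_mem : c ∈ ball (0:ℂ) 1 := hc 0 h0 ▸ hh.2 h0
  have horbit : ∀ z ∈ ball (0:ℂ) 1, ∀ w ∈ ball (0:ℂ) 1,
      Tendsto (fun n => pd (f^[n] z) (f^[n] w)) atTop (𝓝 0) := by
    intro z hz w hw
    have hlim : ∀ u ∈ ball (0:ℂ) 1, Tendsto (fun n => γinv n (f^[n] u)) atTop (𝓝 c) :=
      fun u hu => hc u hu ▸ hconv.tendsto_at hu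
    refine (tendsto_pd_zero_of_tendsto hc_mem (hlim z hz) (hlim w hw)).congr fun n => ?_
    exact (hγ n).pd_inv_eq (hf.2.iterate n hz) (hf.2.iterate n hw)
  refine ⟨horbit, fun z hz => ?_⟩
  simpa only [Function.iterate_succ_apply] using horbit z hz (f z) (hf.2 hz)

theorem stmt7 (f : ℂ → ℂ) (hf : HolSelfDisk f)
    (hfix : ∀ z ∈ ball (0:ℂ) 1, f z ≠ z)
    (γ γinv : ℕ → ℂ → ℂ) (h : ℂ → ℂ)
    (hγ : ∀ n, IsDiskAutPair (γ n) (γinv n)) (hh : HolSelfDisk h)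
    (hconv : TendstoLocallyUniformlyOn (fun n z => γinv n (f^[n] z)) h atTop (ball (0:ℂ) 1))
    (hconst : ∃ c : ℂ, ∀ z ∈ ball (0:ℂ) 1, h z = c) :
    (∀ z ∈ ball (0:ℂ) 1, ∀ w ∈ ball (0:ℂ) 1,
      Tendsto (fun n => pd (f^[n] z) (f^[n] w)) atTop (nhds 0)) ∧
    (∀ z ∈ ball (0:ℂ) 1,
      Tendsto (fun n => pd (f^[n] z) (f^[n+1] z)) atTop (nhds 0)) :=
  stmt7_general f hf γ γinv h hγ hh hconv hconst
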